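/- arXiv:2509.13793 — 4 statements merged into one kernel-verified Lean document; each statement's English description precedes it below -/
import Mathlib

section
/- Let r ∈ ℝ^m with all entries positive, Q ∈ ℝ^{m×m} skew-symmetric, P ∈ ℝ^{k×k} skew-symmetric, and M ∈ ℝ^{m×k}. Then diag(r) - Q is invertible, and the matrix H̃ = P - Mᵀ (diag(r) - Q)⁻¹ M satisfies H̃ + H̃ᵀ ⪯ 0 (is negative semidefinite). -/
open Matrix

lemma skew_quad {n : ℕ} (S : Matrix (Fin n) (Fin n) ℝ) (hS : Sᵀ = -S) (v : Fin n → ℝ) :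
    v ⬝ᵥ S.mulVec v = 0 := by
  have h1 : v ⬝ᵥ S.mulVec v = Sᵀ.mulVec v ⬝ᵥ v := by
    rw [Matrix.dotProduct_mulVec, Matrix.mulVec_transpose]
  rw [hS] at h1
  have h2 : (-S).mulVec v ⬝ᵥ v = -(v ⬝ᵥ S.mulVec v) := by
    simp [Matrix.neg_mulVec, dotProduct_comm]
  linarith [h1, h2]

lemma posdef_quad {m : ℕ} (r : Fin m → ℝ)
    (Q : Matrix (Fin m) (Fin m) ℝ) (hQ : Qᵀ = -Q) (v : Fin m → ℝ) :
    v ⬝ᵥ (Matrix.diagonal r - Q).mulVec v = ∑ i, r i * v i ^ 2 := by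
  rw [Matrix.sub_mulVec, dotProduct_sub, skew_quad Q hQ, sub_zero]
  simp only [dotProduct, Matrix.mulVec_diagonal]
  exact Finset.sum_congr rfl fun i _ => by ring

/-- Hybrid matrix of a lossless interconnection loaded with positive resistors:
`diag r - Q` is invertible and `H̃ = P - Mᵀ (diag r - Q)⁻¹ M` satisfies
`H̃ + H̃ᵀ ⪯ 0`. -/
theorem hybrid_matrix_neg_semidef {m k : ℕ} (r : Fin m → ℝ) (hr : ∀ i, 0 < r i)
    (Q : Matrix (Fin m) (Fin m) ℝ) (hQ : Qᵀ = -Q)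
    (P : Matrix (Fin k) (Fin k) ℝ) (hP : Pᵀ = -P)
    (M : Matrix (Fin m) (Fin k) ℝ) :
    IsUnit (Matrix.diagonal r - Q) ∧
    ∀ x : Fin k → ℝ,
      x ⬝ᵥ ((P - Mᵀ * (Matrix.diagonal r - Q)⁻¹ * M) +
            (P - Mᵀ * (Matrix.diagonal r - Q)⁻¹ * M)ᵀ).mulVec x ≤ 0 := by
  set A := Matrix.diagonal r - Q with hA
  have hdet : IsUnit A.det := by
    rw [isUnit_iff_ne_zero]
    intro h
    obtain ⟨v, hv, hAv⟩ := (Matrix.exists_mulVec_eq_zero_iff).mpr h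
    have h0 : v ⬝ᵥ A.mulVec v = 0 := by rw [hAv]; simp
    rw [posdef_quad r Q hQ v] at h0
    have hz : ∀ i, r i * v i ^ 2 = 0 := by
      have hnn : ∀ i ∈ Finset.univ, (0:ℝ) ≤ r i * v i ^ 2 := fun i _ =>
        mul_nonneg (hr i).le (sq_nonneg _)
      intro i
      exact (Finset.sum_eq_zero_iff_of_nonneg hnn).mp h0 i (Finset.mem_univ i)
    apply hv
    funext i
    show v i = 0
    have h2 : v i ^ 2 = 0 := (mul_eq_zero.mp (hz i)).resolve_left (hr i).ne'
    exact pow_eq_zero_iff two_ne_zero |>.mp h2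
  have hU : IsUnit A := (Matrix.isUnit_iff_isUnit_det A).mpr hdet
  refine ⟨hU, fun x => ?_⟩
  set y := A⁻¹.mulVec (M.mulVec x) with hy
  have hAy : A.mulVec y = M.mulVec x := by
    rw [hy, Matrix.mulVec_mulVec, Matrix.mul_nonsing_inv A hdet, Matrix.one_mulVec]
  have hsum : (P - Mᵀ * A⁻¹ * M) + (P - Mᵀ * A⁻¹ * M)ᵀ
      = -(Mᵀ * A⁻¹ * M) - Mᵀ * (A⁻¹)ᵀ * M := by
    rw [Matrix.transpose_sub, hP, Matrix.transpose_mul, Matrix.transpose_mul,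
      Matrix.transpose_transpose]
    simp only [Matrix.mul_assoc]
    abel
  rw [hsum]
  have key : ∀ B : Matrix (Fin m) (Fin m) ℝ,
      x ⬝ᵥ (Mᵀ * B * M).mulVec x = (M.mulVec x) ⬝ᵥ B.mulVec (M.mulVec x) := by
    intro B
    rw [← Matrix.mulVec_mulVec, ← Matrix.mulVec_mulVec, Matrix.dotProduct_mulVec,
      Matrix.vecMul_transpose]
  have e1 : x ⬝ᵥ (Mᵀ * A⁻¹ * M).mulVec x = (M.mulVec x) ⬝ᵥ y := by
    rw [key, ← hy]
  have e2 : x ⬝ᵥ (Mᵀ * (A⁻¹)ᵀ * M).mulVec x = y ⬝ᵥ (M.mulVec x) := by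
    rw [key, Matrix.dotProduct_mulVec, Matrix.vecMul_transpose, ← hy]
  have hq : y ⬝ᵥ A.mulVec y = ∑ i, r i * y i ^ 2 := posdef_quad r Q hQ y
  have hnn : (0:ℝ) ≤ ∑ i, r i * y i ^ 2 :=
    Finset.sum_nonneg fun i _ => mul_nonneg (hr i).le (sq_nonneg _)
  have hc : (M.mulVec x) ⬝ᵥ y = y ⬝ᵥ (M.mulVec x) := dotProduct_comm _ _
  rw [Matrix.sub_mulVec, dotProduct_sub, Matrix.neg_mulVec, dotProduct_neg,
    e1, e2, hc]
  have : y ⬝ᵥ (M.mulVec x) = ∑ i, r i * y i ^ 2 := by rw [← hAy, hq]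
  rw [this]
  linarith
end

section
/- Every Stieltjes matrix is a nonsingular matrix whose inverse has all entries nonnegative. -/
open Matrix

/-!
A column `x` of `A⁻¹` satisfies `A x ≥ 0`, and any such `x` is nonnegative: split
`x = x⁺ - x⁻`. Since `x⁺` and `x⁻` have disjoint supports and `A` has nonpositive off-diagonal
entries, `x⁻ᵀ A x⁺ ≤ 0`, hence `x⁻ᵀ A x⁻ = x⁻ᵀ A x⁺ - x⁻ᵀ A x ≤ 0`. Positive definiteness
forces `x⁻ = 0`.
-/

lemma posPart_mul_negPart_eq_zero {R : Type*} [Ring R] [LinearOrder R] [IsOrderedRing R]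
    (a : R) : a⁺ * a⁻ = 0 := by
  rcases le_total a 0 with h | h
  · rw [posPart_eq_zero.mpr h, zero_mul]
  · rw [negPart_eq_zero.mpr h, mul_zero]

namespace Matrix

variable {ι R : Type*} [Fintype ι] [CommRing R] [LinearOrder R]

lemma dotProduct_mulVec_nonpos_of_offDiag_nonpos [IsOrderedRing R] {A : Matrix ι ι R}
    (hoff : ∀ i j, i ≠ j → A i j ≤ 0) {u v : ι → R} (hu : 0 ≤ u) (hv : 0 ≤ v)
    (huv : ∀ i, u i * v i = 0) : v ⬝ᵥ (A *ᵥ u) ≤ 0 := by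
  simp only [dotProduct, mulVec, Finset.mul_sum]
  refine Finset.sum_nonpos fun i _ => Finset.sum_nonpos fun j _ => ?_
  rcases eq_or_ne i j with rfl | hij
  · rw [mul_left_comm, mul_comm (v i), huv, mul_zero]
  · rw [mul_left_comm]
    exact mul_nonpos_of_nonpos_of_nonneg (hoff i j hij) (mul_nonneg (hv i) (hu j))

lemma PosDef.nonneg_of_mulVec_nonneg [IsStrictOrderedRing R] [StarRing R] [TrivialStar R]
    {A : Matrix ι ι R} (hA : A.PosDef) (hoff : ∀ i j, i ≠ j → A i j ≤ 0) {x : ι → R}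
    (hx : 0 ≤ A *ᵥ x) : 0 ≤ x := by
  rw [← negPart_eq_zero]
  by_contra hne
  have hpos : 0 < x⁻ ⬝ᵥ (A *ᵥ x⁻) := by simpa using hA.dotProduct_mulVec_pos hne
  have hcross : x⁻ ⬝ᵥ (A *ᵥ x⁺) ≤ 0 :=
    dotProduct_mulVec_nonpos_of_offDiag_nonpos hoff (posPart_nonneg x) (negPart_nonneg x)
      fun i => posPart_mul_negPart_eq_zero (x i)
  have hsplit : x⁻ ⬝ᵥ (A *ᵥ x⁻) = x⁻ ⬝ᵥ (A *ᵥ x⁺) - x⁻ ⬝ᵥ (A *ᵥ x) := by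
    rw [← dotProduct_sub, ← mulVec_sub,
      sub_eq_iff_eq_add'.mpr (sub_eq_iff_eq_add.mp (posPart_sub_negPart x))]
  have hAx : 0 ≤ x⁻ ⬝ᵥ (A *ᵥ x) := dotProduct_nonneg_of_nonneg (negPart_nonneg x) hx
  linarith

end Matrix

theorem stieltjes_inverse_nonneg_general {n : ℕ} (A : Matrix (Fin n) (Fin n) ℝ)
    (hpd : A.PosDef)
    (hoff : ∀ i j, i ≠ j → A i j ≤ 0) :
    IsUnit A ∧ ∀ i j, 0 ≤ A⁻¹ i j := by
  have hdet : IsUnit A.det := hpd.det_pos.ne'.isUnit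
  refine ⟨(isUnit_iff_isUnit_det A).mpr hdet, fun i j => ?_⟩
  have hcol : A *ᵥ (A⁻¹ *ᵥ Pi.single j 1) = Pi.single j 1 := by
    rw [mulVec_mulVec, mul_nonsing_inv A hdet, one_mulVec]
  have hx := hpd.nonneg_of_mulVec_nonneg hoff (hcol ▸ Pi.single_nonneg.mpr zero_le_one)
  simpa [mulVec_single_one] using hx i

/-- Every Stieltjes matrix (symmetric positive definite with nonpositive
off-diagonal entries) is nonsingular with entrywise nonnegative inverse. -/
theorem stieltjes_inverse_nonneg {n : ℕ} (A : Matrix (Fin n) (Fin n) ℝ)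
    (hsym : Aᵀ = A) (hpd : A.PosDef)
    (hoff : ∀ i j, i ≠ j → A i j ≤ 0) :
    IsUnit A ∧ ∀ i j, 0 ≤ A⁻¹ i j :=
  stieltjes_inverse_nonneg_general A hpd hoff
end

section
/- Let ψ: ℝⁿ → 𝒫(ℝⁿ) act entrywise as the reverse-biased ideal diode admittance Y_diode, where Y_diode(v) = {0} for v > 0, Y_diode(0) = (-∞, 0], Y_diode(v) = ∅ for v < 0. Let H ∈ ℝ^{n×n} be diagonal with positive diagonal entries and let b ∈ ℝⁿ. Then the unique v ∈ ℝⁿ satisfying 0 ∈ Hv + ψ(v) + b is given entrywise by v[j] = max(-b[j]/H[j][j], 0) = ReLU(-H⁻¹b)[j]. -/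
open Matrix

/-- The reverse-biased ideal diode admittance as a set-valued map. -/
noncomputable def Ydiode (v : ℝ) : Set ℝ :=
  if v > 0 then {0} else if v = 0 then Set.Iic 0 else ∅

/-! Since `H` is diagonal, the inclusion `0 ∈ Hv + ψ(v) + b` forces `w = -(Hv + b)` and decouples
into the scalar complementarity problems `v ≥ 0`, `d v + b ≥ 0`, `v (d v + b) = 0`: either `v = 0`
and `b ≥ 0`, or `v > 0` and `v = -b / d`. Both cases are `v = max (-b / d) 0`. -/

theorem mem_Ydiode_iff {v w : ℝ} : w ∈ Ydiode v ↔ 0 < v ∧ w = 0 ∨ v = 0 ∧ w ≤ 0 := by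
  unfold Ydiode
  split_ifs with hpos hzero
  · simp [hpos, hpos.ne']
  · simp [hzero]
  · simp only [Set.mem_empty_iff_false, false_iff]
    rintro (⟨h, -⟩ | ⟨h, -⟩) <;> simp_all

theorem neg_add_mem_Ydiode_iff {a b v : ℝ} (ha : 0 < a) :
    -(a * v + b) ∈ Ydiode v ↔ v = max (-b / a) 0 := by
  have hmul : a * (-b / a) = -b := mul_div_cancel₀ _ ha.ne'
  rw [mem_Ydiode_iff, neg_eq_zero, neg_nonpos]
  rcases le_or_gt (-b / a) 0 with hc | hc
  · rw [max_eq_right hc]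
    constructor
    · rintro (⟨hv, hv'⟩ | ⟨hv, -⟩)
      · nlinarith
      · exact hv
    · rintro rfl
      right; constructor <;> nlinarith
  · rw [max_eq_left hc.le]
    constructor
    · rintro (⟨-, hv⟩ | ⟨rfl, hb⟩)
      · field_simp; linarith
      · nlinarith
    · rintro rfl
      left; exact ⟨hc, by linarith⟩

theorem exists_add_add_eq_zero_iff {M : Type*} [AddCommGroup M] {P : M → Prop} {x b : M} :
    (∃ w, P w ∧ x + w + b = 0) ↔ P (-(x + b)) := by
  constructor
  · rintro ⟨w, hw, h⟩
    obtain rfl : w = -(x + b) := by rw [← sub_eq_zero, ← h]; abel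
    exact hw
  · exact fun h => ⟨_, h, by abel⟩

/-- With `ψ` acting entrywise as the reverse-biased ideal diode admittance and
`H` diagonal with positive diagonal entries, the unique solution of
`0 ∈ Hv + ψ(v) + b` is `v = ReLU(-H⁻¹ b)`, entrywise `v j = max (-(b j)/(H j j)) 0`. -/
theorem crossbar_layer_relu {n : ℕ} (d : Fin n → ℝ) (hd : ∀ j, 0 < d j)
    (H : Matrix (Fin n) (Fin n) ℝ) (hH : H = Matrix.diagonal d)
    (b : Fin n → ℝ) (v : Fin n → ℝ) :
    (∃ w : Fin n → ℝ, (∀ j, w j ∈ Ydiode (v j)) ∧ H.mulVec v + w + b = 0) ↔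
      ∀ j, v j = max (-(b j) / H j j) 0 := by
  subst hH
  rw [exists_add_add_eq_zero_iff]
  refine forall_congr' fun j => ?_
  simpa [mulVec_diagonal] using neg_add_mem_Ydiode_iff (b := b j) (v := v j) (hd j)
end

section
/- Since the Lambert W function satisfies W(x)e^{W(x)} = x for x > 0, for any constants n, v_T, i_s > 0 and any v ∈ ℝ, the value i = n·v_T·W((i_s/(n·v_T))·exp((v + i_s)/(n·v_T))) - i_s satisfies v = i + n·v_T·log(i/i_s + 1). That is, the diode ReLU is the resolvent of the Shockley diode impedance. -/
open Real

theorem Real.log_div_eq_sub_of_mul_exp_eq {w a b : ℝ} (ha : a ≠ 0)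
    (h : w * exp w = a * exp b) : log (w / a) = b - w := by
  have hquot : w / a = exp (b - w) := by
    rw [exp_sub, div_eq_div_iff ha (exp_pos w).ne']
    linear_combination h
  rw [hquot, log_exp]

theorem diode_relu_resolvent_general (W : ℝ → ℝ)
    (hW : ∀ x > 0, W x * Real.exp (W x) = x)
    (n vT is : ℝ) (hn : 0 < n) (hvT : 0 < vT) (his : 0 < is) (v : ℝ) :
    v = (n * vT * W (is / (n * vT) * Real.exp ((v + is) / (n * vT))) - is) +
        n * vT * Real.log
          ((n * vT * W (is / (n * vT) * Real.exp ((v + is) / (n * vT))) - is) / is + 1) := by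
  set c := n * vT
  have hc : c ≠ 0 := by positivity
  set w := W (is / c * exp ((v + is) / c))
  have hw : w * exp w = is / c * exp ((v + is) / c) := hW _ (by positivity)
  have hcurrent : (c * w - is) / is + 1 = w / (is / c) := by
    field_simp
    ring
  rw [hcurrent, log_div_eq_sub_of_mul_exp_eq (div_ne_zero his.ne' hc) hw]
  field_simp
  ring

/-- The diode ReLU is the resolvent of the Shockley diode impedance: if `W`
satisfies `W(x) e^{W(x)} = x` and `W(x) > 0` for `x > 0`, then for positive
constants `n, vT, is` and any `v`, the value
`i = n vT W((is/(n vT)) exp((v + is)/(n vT))) - is` satisfies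
`v = i + n vT log(i/is + 1)`. -/
theorem diode_relu_resolvent (W : ℝ → ℝ)
    (hW : ∀ x > 0, W x * Real.exp (W x) = x)
    (hWpos : ∀ x > 0, 0 < W x)
    (n vT is : ℝ) (hn : 0 < n) (hvT : 0 < vT) (his : 0 < is) (v : ℝ) :
    v = (n * vT * W (is / (n * vT) * Real.exp ((v + is) / (n * vT))) - is) +
        n * vT * Real.log
          ((n * vT * W (is / (n * vT) * Real.exp ((v + is) / (n * vT))) - is) / is + 1) :=
  diode_relu_resolvent_general W hW n vT is hn hvT his v
end
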